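/- Let n ≥ 1 and let F : ℝ^n → ℝ be nonnegative and L-Lipschitz continuous for some L > 0. Let x_0 ∈ ℝ^n and M := F(x_0) > 0. Then ∫_{B_R(x_0)} F²(x) dx ≥ (2ω_n / ((n+1)(n+2))) · M^{n+2}/L^n, where ω_n is the volume of the unit ball in ℝ^n and R = M/L. -/

import Mathlib

open MeasureTheory Metric Set Filter
open scoped RealInnerProductSpace NNReal ENNReal

noncomputable section

/-- Surface measure on `ℝ^d`: the `(d-1)`-dimensional Hausdorff measure
(its restriction to the unit sphere is the surface measure of `∂B₁`). -/
abbrev surfMeasure (d : ℕ) : Measure (EuclideanSpace ℝ (Fin d)) := μH[(d : ℝ) - 1]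

/-- The Weiss boundary adjusted energy
`W₀(u) = ∫_{B₁} |∇u|² - 2 ∫_{∂B₁} u² dℋ^{d-1}`. -/
noncomputable def W0 (d : ℕ) (u : EuclideanSpace ℝ (Fin d) → ℝ) : ℝ :=
  (∫ x in Metric.ball (0 : EuclideanSpace ℝ (Fin d)) 1, ‖gradient u x‖ ^ 2) -
    2 * ∫ x in Metric.sphere (0 : EuclideanSpace ℝ (Fin d)) 1, u x ^ 2 ∂(surfMeasure d)

/-- The Weiss boundary adjusted energy `W(u) = W₀(u) + ∫_{B₁} u`. -/
noncomputable def W (d : ℕ) (u : EuclideanSpace ℝ (Fin d) → ℝ) : ℝ :=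
  W0 d u + ∫ x in Metric.ball (0 : EuclideanSpace ℝ (Fin d)) 1, u x

/-- Membership in `H¹(B₁)`: the function and its gradient are square integrable on `B₁`. -/
def MemH1 (d : ℕ) (u : EuclideanSpace ℝ (Fin d) → ℝ) : Prop :=
  MemLp u 2 (volume.restrict (Metric.ball (0 : EuclideanSpace ℝ (Fin d)) 1)) ∧
  MemLp (fun x => ‖gradient u x‖) 2
    (volume.restrict (Metric.ball (0 : EuclideanSpace ℝ (Fin d)) 1))

/-- The zero-homogeneous extension of a function on the sphere. -/
def zeroExt (d : ℕ) (c : EuclideanSpace ℝ (Fin d) → ℝ) : EuclideanSpace ℝ (Fin d) → ℝ :=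
  fun x => c (‖x‖⁻¹ • x)

/-- The tangential gradient `∇_θ` on the sphere, computed via the 0-homogeneous extension. -/
noncomputable def tgrad (d : ℕ) (c : EuclideanSpace ℝ (Fin d) → ℝ) :
    EuclideanSpace ℝ (Fin d) → EuclideanSpace ℝ (Fin d) :=
  fun θ => gradient (zeroExt d c) θ

/-- Membership in `H¹(∂B₁)`. -/
def MemH1S (d : ℕ) (c : EuclideanSpace ℝ (Fin d) → ℝ) : Prop :=
  MemLp c 2 ((surfMeasure d).restrict (Metric.sphere (0 : EuclideanSpace ℝ (Fin d)) 1)) ∧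
  MemLp (fun θ => ‖tgrad d c θ‖) 2
    ((surfMeasure d).restrict (Metric.sphere (0 : EuclideanSpace ℝ (Fin d)) 1))

/-- The class `𝒮` of 2-homogeneous polynomials `Q_A(x) = x ⬝ A x` with `A` symmetric
non-negative and `tr A = 1/4`. -/
def Sset (d : ℕ) : Set (EuclideanSpace ℝ (Fin d) → ℝ) :=
  {Q | ∃ A : Matrix (Fin d) (Fin d) ℝ, A.PosSemidef ∧ A.trace = 1 / 4 ∧
        ∀ x, Q x = ∑ i, ∑ j, x i * (A i j * x j)}

/-- `W(𝒮)`: the common value of `W` on `𝒮` (computed on `|x|²/(4d) ∈ 𝒮`). -/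
noncomputable def WS (d : ℕ) : ℝ := W d fun x => ‖x‖ ^ 2 / (4 * d)

/-- The `L²(∂B₁)` distance of `c` to the set `𝒮`. -/
noncomputable def distS (d : ℕ) (c : EuclideanSpace ℝ (Fin d) → ℝ) : ℝ :=
  ⨅ Q : Sset d, Real.sqrt (∫ θ in Metric.sphere (0 : EuclideanSpace ℝ (Fin d)) 1,
    (c θ - (Q : EuclideanSpace ℝ (Fin d) → ℝ) θ) ^ 2 ∂(surfMeasure d))

/-- The `α`-homogeneous extension of a function on the sphere:
`(r,θ) ↦ r^α c(θ)` in polar coordinates. -/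
noncomputable def homExt (d : ℕ) (α : ℝ) (c : EuclideanSpace ℝ (Fin d) → ℝ) :
    EuclideanSpace ℝ (Fin d) → ℝ :=
  fun x => ‖x‖ ^ α * c (‖x‖⁻¹ • x)

/-- The functional `ℱ(φ) = ∫_{∂B₁} (|∇_θ φ|² - 2dφ² + φ) dℋ^{d-1}`. -/
noncomputable def Ffun (d : ℕ) (φ : EuclideanSpace ℝ (Fin d) → ℝ) : ℝ :=
  ∫ θ in Metric.sphere (0 : EuclideanSpace ℝ (Fin d)) 1,
    (‖tgrad d φ θ‖ ^ 2 - 2 * d * φ θ ^ 2 + φ θ) ∂(surfMeasure d)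

/-- The Euclidean Laplacian. -/
noncomputable def eucLap (d : ℕ) (f : EuclideanSpace ℝ (Fin d) → ℝ) :
    EuclideanSpace ℝ (Fin d) → ℝ :=
  fun x => ∑ i : Fin d,
    iteratedFDeriv ℝ 2 f x ![EuclideanSpace.single i 1, EuclideanSpace.single i 1]

/-- The Laplace–Beltrami operator `Δ_{∂B₁}` on the sphere, computed via the
0-homogeneous extension. -/
noncomputable def sphereLap (d : ℕ) (c : EuclideanSpace ℝ (Fin d) → ℝ) :
    EuclideanSpace ℝ (Fin d) → ℝ :=
  eucLap d (zeroExt d c)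

/-- `∇ℱ(φ) = -2Δ_{∂B₁}φ - 4dφ + 1`. -/
noncomputable def gradF (d : ℕ) (φ : EuclideanSpace ℝ (Fin d) → ℝ) :
    EuclideanSpace ℝ (Fin d) → ℝ :=
  fun θ => -2 * sphereLap d φ θ - 4 * d * φ θ + 1

/-- `u` solves the obstacle problem in `B₁`. -/
def IsObstacleSol (d : ℕ) (u : EuclideanSpace ℝ (Fin d) → ℝ) : Prop :=
  (∀ x ∈ Metric.ball (0 : EuclideanSpace ℝ (Fin d)) 1, 0 ≤ u x) ∧
  ∀ v : EuclideanSpace ℝ (Fin d) → ℝ, MemH1 d v →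
    (∀ x ∈ Metric.ball (0 : EuclideanSpace ℝ (Fin d)) 1, 0 ≤ v x) →
    (∀ x ∈ Metric.sphere (0 : EuclideanSpace ℝ (Fin d)) 1, u x = v x) →
    (∫ x in Metric.ball (0 : EuclideanSpace ℝ (Fin d)) 1, (‖gradient u x‖ ^ 2 + u x)) ≤
      ∫ x in Metric.ball (0 : EuclideanSpace ℝ (Fin d)) 1, (‖gradient v x‖ ^ 2 + v x)

/-- The positivity set `Ω_u = {u > 0}`. -/
def posSet (d : ℕ) (u : EuclideanSpace ℝ (Fin d) → ℝ) : Set (EuclideanSpace ℝ (Fin d)) :=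
  {x | x ∈ Metric.ball (0 : EuclideanSpace ℝ (Fin d)) 1 ∧ 0 < u x}

/-- The singular set `Sing(∂Ω_u)`: free boundary points of full density. -/
def SingSet (d : ℕ) (u : EuclideanSpace ℝ (Fin d) → ℝ) : Set (EuclideanSpace ℝ (Fin d)) :=
  {x₀ | x₀ ∈ frontier (posSet d u) ∧
    Filter.Tendsto
      (fun r => volume (Metric.ball x₀ r ∩ posSet d u) / volume (Metric.ball x₀ r))
      (nhdsWithin 0 (Set.Ioi 0)) (nhds 1)}

/-- The parabolic rescaling `u_{r,x₀}(x) = u(x₀ + rx)/r²`. -/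
noncomputable def blowupSeq (d : ℕ) (u : EuclideanSpace ℝ (Fin d) → ℝ)
    (x₀ : EuclideanSpace ℝ (Fin d)) (r : ℝ) : EuclideanSpace ℝ (Fin d) → ℝ :=
  fun x => u (x₀ + r • x) / r ^ 2

/-- `Q` is the blow-up limit of `u` at `x₀` along the full limit `r → 0⁺`,
in the `L²(∂B₁)` sense. -/
def IsBlowupLimit (d : ℕ) (u Q : EuclideanSpace ℝ (Fin d) → ℝ)
    (x₀ : EuclideanSpace ℝ (Fin d)) : Prop :=
  Filter.Tendsto
    (fun r => Real.sqrt (∫ θ in Metric.sphere (0 : EuclideanSpace ℝ (Fin d)) 1,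
      (blowupSeq d u x₀ r θ - Q θ) ^ 2 ∂(surfMeasure d)))
    (nhdsWithin 0 (Set.Ioi 0)) (nhds 0)

/-! Since `F` is `L`-Lipschitz, `F x ≥ F x₀ - L |x - x₀| = L (R - |x - x₀|)` with `R = F x₀ / L`,
and the right-hand side is positive on `B_R(x₀)`; so `∫_{B_R(x₀)} F²` dominates the integral of the
squared cone `L² (R - |x - x₀|)²`. In polar coordinates that integral is
`n ω_n L² ∫₀^R r^(n-1) (R - r)² dr = 2 ω_n L² R^(n+2) / ((n+1)(n+2))`. -/

theorem integral_pow_mul_sub_sq (m : ℕ) (R : ℝ) :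
    ∫ y in (0 : ℝ)..R, y ^ m * (R - y) ^ 2 = 2 * R ^ (m + 3) / ((m + 1) * (m + 2) * (m + 3)) := by
  have hpow (k : ℕ) : IntervalIntegrable (fun y : ℝ => y ^ k) volume 0 R :=
    intervalIntegral.intervalIntegrable_pow k
  have expand (y : ℝ) : y ^ m * (R - y) ^ 2 = R ^ 2 * y ^ m - 2 * R * y ^ (m + 1) + y ^ (m + 2) := by
    ring
  simp_rw [expand]
  rw [intervalIntegral.integral_add (((hpow _).const_mul _).sub ((hpow _).const_mul _)) (hpow _),
    intervalIntegral.integral_sub ((hpow _).const_mul _) ((hpow _).const_mul _),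
    intervalIntegral.integral_const_mul, intervalIntegral.integral_const_mul,
    integral_pow, integral_pow, integral_pow]
  push_cast
  field_simp
  ring

theorem integral_Ioi_pow_mul_max_sub_sq (m : ℕ) {R : ℝ} (hR : 0 ≤ R) :
    ∫ y in Ioi (0 : ℝ), y ^ m * max (R - y) 0 ^ 2 =
      2 * R ^ (m + 3) / ((m + 1) * (m + 2) * (m + 3)) := by
  rw [setIntegral_eq_of_subset_of_forall_sdiff_eq_zero measurableSet_Ioi Ioc_subset_Ioi_self,
    ← intervalIntegral.integral_of_le hR, ← integral_pow_mul_sub_sq]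
  · refine intervalIntegral.integral_congr fun y hy => ?_
    rw [uIcc_of_le hR] at hy
    simp only [max_eq_left (sub_nonneg.2 hy.2)]
  · rintro y ⟨hy0, hyR⟩
    simp [max_eq_right (sub_nonpos.2 (le_of_not_ge fun h => hyR ⟨hy0, h⟩))]

section
variable {E : Type*} [NormedAddCommGroup E] [NormedSpace ℝ E] [FiniteDimensional ℝ E]
  [Nontrivial E] [MeasurableSpace E] [BorelSpace E] (μ : Measure E) [μ.IsAddHaarMeasure]

theorem integral_max_sub_norm_sq_addHaar {R : ℝ} (hR : 0 ≤ R) :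
    ∫ x, max (R - ‖x‖) 0 ^ 2 ∂μ =
      2 * μ.real (ball 0 1) * R ^ (Module.finrank ℝ E + 2) /
        ((Module.finrank ℝ E + 1) * (Module.finrank ℝ E + 2)) := by
  obtain ⟨m, hm⟩ : ∃ m, Module.finrank ℝ E = m + 1 :=
    Nat.exists_eq_add_one.2 Module.finrank_pos
  rw [integral_fun_norm_addHaar μ (fun r => max (R - r) 0 ^ 2), hm]
  simp only [add_tsub_cancel_right, smul_eq_mul, nsmul_eq_mul, integral_Ioi_pow_mul_max_sub_sq m hR]
  push_cast
  field_simp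
  ring

theorem setIntegral_ball_sub_dist_sq_addHaar (x₀ : E) {R : ℝ} (hR : 0 ≤ R) :
    ∫ x in ball x₀ R, (R - dist x x₀) ^ 2 ∂μ =
      2 * μ.real (ball 0 1) * R ^ (Module.finrank ℝ E + 2) /
        ((Module.finrank ℝ E + 1) * (Module.finrank ℝ E + 2)) := by
  calc ∫ x in ball x₀ R, (R - dist x x₀) ^ 2 ∂μ
      = ∫ x in ball x₀ R, max (R - ‖x - x₀‖) 0 ^ 2 ∂μ :=
        setIntegral_congr_fun measurableSet_ball fun x hx => by
          rw [← dist_eq_norm, max_eq_left (sub_nonneg.2 (mem_ball.1 hx).le)]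
    _ = ∫ x, max (R - ‖x - x₀‖) 0 ^ 2 ∂μ :=
        setIntegral_eq_integral_of_forall_compl_eq_zero fun x hx => by
          rw [← dist_eq_norm, max_eq_right (sub_nonpos.2 (not_lt.1 hx))]
          simp
    _ = _ := by
        rw [integral_sub_right_eq_self (fun x => max (R - ‖x‖) 0 ^ 2) x₀,
          integral_max_sub_norm_sq_addHaar μ hR]
end

theorem setIntegral_ball_sq_sub_mul_dist_le {X : Type*} [MetricSpace X] [ProperSpace X]
    [MeasurableSpace X] [OpensMeasurableSpace X] (μ : Measure X) [IsFiniteMeasureOnCompacts μ]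
    {F : X → ℝ} {L : ℝ} (hL : 0 < L) (hlip : ∀ x y, |F x - F y| ≤ L * dist x y) (x₀ : X) :
    ∫ x in ball x₀ (F x₀ / L), (F x₀ - L * dist x x₀) ^ 2 ∂μ ≤
      ∫ x in ball x₀ (F x₀ / L), F x ^ 2 ∂μ := by
  have hF : Continuous F :=
    (LipschitzWith.of_dist_le' fun x y => (Real.dist_eq _ _).trans_le (hlip x y)).continuous
  refine setIntegral_mono_on ?_ ?_ measurableSet_ball fun x hx => ?_
  · exact ((by fun_prop : Continuous fun x => (F x₀ - L * dist x x₀) ^ 2).continuousOn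
      |>.integrableOn_compact (isCompact_closedBall _ _)).mono_set ball_subset_closedBall
  · exact ((hF.pow 2).continuousOn.integrableOn_compact
      (isCompact_closedBall _ _)).mono_set ball_subset_closedBall
  · have hpos : 0 ≤ F x₀ - L * dist x x₀ := by
      rw [mem_ball, lt_div_iff₀ hL] at hx
      linarith
    have hcone : F x₀ - L * dist x x₀ ≤ F x := by
      have := (abs_le.1 (hlip x₀ x)).2
      rw [dist_comm] at this
      linarith
    exact pow_le_pow_left₀ hpos hcone 2

theorem lipschitz_sq_integral_lower_bound_general (n : ℕ) (hn : 1 ≤ n)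
    (F : EuclideanSpace ℝ (Fin n) → ℝ)
    (L : ℝ) (hL : 0 < L) (hlip : ∀ x y, |F x - F y| ≤ L * dist x y)
    (x₀ : EuclideanSpace ℝ (Fin n)) (hM : 0 < F x₀) :
    2 * (volume (Metric.ball (0 : EuclideanSpace ℝ (Fin n)) 1)).toReal /
        ((n + 1) * (n + 2)) * (F x₀ ^ (n + 2) / L ^ n) ≤
      ∫ x in Metric.ball x₀ (F x₀ / L), F x ^ 2 := by
  have : Nontrivial (EuclideanSpace ℝ (Fin n)) :=
    Module.finrank_pos_iff (R := ℝ).1 (by rwa [finrank_euclideanSpace_fin])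
  set R := F x₀ / L
  have hLR : L * R = F x₀ := mul_div_cancel₀ _ hL.ne'
  calc 2 * (volume (ball (0 : EuclideanSpace ℝ (Fin n)) 1)).toReal /
        ((n + 1) * (n + 2)) * (F x₀ ^ (n + 2) / L ^ n)
      = L ^ 2 * ∫ x in ball x₀ R, (R - dist x x₀) ^ 2 := by
        rw [setIntegral_ball_sub_dist_sq_addHaar volume x₀ (div_pos hM hL).le,
          finrank_euclideanSpace_fin, measureReal_def, ← hLR]
        field_simp
        ring
    _ = ∫ x in ball x₀ R, (F x₀ - L * dist x x₀) ^ 2 := by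
        rw [← integral_const_mul, ← hLR]
        simp only [← mul_pow, mul_sub]
    _ ≤ ∫ x in ball x₀ R, F x ^ 2 := setIntegral_ball_sq_sub_mul_dist_le volume hL hlip x₀

/-- **Lemma 3.2**: lower bound on the `L²` norm of a non-negative `L`-Lipschitz function
in terms of its value at a point. -/
theorem lipschitz_sq_integral_lower_bound (n : ℕ) (hn : 1 ≤ n)
    (F : EuclideanSpace ℝ (Fin n) → ℝ) (hF : ∀ x, 0 ≤ F x)
    (L : ℝ) (hL : 0 < L) (hlip : ∀ x y, |F x - F y| ≤ L * dist x y)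
    (x₀ : EuclideanSpace ℝ (Fin n)) (hM : 0 < F x₀) :
    2 * (volume (Metric.ball (0 : EuclideanSpace ℝ (Fin n)) 1)).toReal /
        ((n + 1) * (n + 2)) * (F x₀ ^ (n + 2) / L ^ n) ≤
      ∫ x in Metric.ball x₀ (F x₀ / L), F x ^ 2 :=
  lipschitz_sq_integral_lower_bound_general n hn F L hL hlip x₀ hM
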